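/- arXiv:1306.0056 — 2 statements merged into one kernel-verified Lean document; each statement's English description precedes it below -/
import Mathlib

section
/- Let p be a prime and n a natural number. Let K ≤ Σ_n be either Σ_n itself or the stabilizer of a strictly increasing chain λ_0 < … < λ_j of proper nontrivial setoids on Fin n. Let D ≤ K be an elementary abelian p-subgroup that acts freely and not transitively on Fin n, and let C and N be, respectively, the centralizer and the normalizer of D in K. Then either (1) p divides the index [C : D], or (2) p is odd and there exists τ ∈ C with τ ≠ 1, τ² = 1, sign(τ) = -1 (τ is an odd involution), such that τ commutes with every element of N whose order is a power of p. -/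
/-!
Let `S` be the finest level of the chain (or `⊤`) modulo which `D` acts transitively on classes,
and `R` the coarsest level (or `⊥`) modulo which it does not; every level of the chain lies below
`R` or above `S`.

If some `d ≠ 1` in `D` fixes an `S`-class then, `D` being abelian and transitive on `S`-classes, it
fixes all of them, and letting `d` act on the `D`-saturation of a single `R`-class only gives a
`p`-element of `C` outside `D`: hence `p ∣ [C : D]`.

Otherwise `D` permutes the `S`-classes regularly, so `Ω ≅ D × B` for an `S`-class `B`, and every
permutation of `B` preserving the chain, copied diagonally to all translates of `B`, lies in `C`
and meets `D` only in `1`. If `p ∤ [C : D]`, the stabilizer of the chain in `Sym(B)` thus has no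
nontrivial `p`-elements; it contains a transposition, so `p` is odd and the diagonal copy `τ` of the
transposition is a product of `|D|` (odd) transpositions. A `p`-element `g` of `N` maps each `e • B`
to some `h • B`, and `h⁻¹ g e` restricted to `B` is a `p`-element, hence trivial; so `g` commutes
with `τ`.
-/

open Equiv Function Subgroup

instance Setoid.instFinite {α : Type*} [Finite α] : Finite (Setoid α) :=
  Finite.of_injective (fun r : Setoid α => (r : α → α → Prop)) fun _ _ h =>
    Setoid.ext fun a b => by simp only at h; rw [h]

theorem Subgroup.dvd_relIndex_of_lt {G : Type*} [Group G] [Finite G] {p : ℕ} [Fact p.Prime]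
    {D P H : Subgroup G} (hP : IsPGroup p P) (hDP : D < P) (hPH : P ≤ H) :
    p ∣ D.relIndex H := by
  obtain ⟨m, hm⟩ := hP.index (D.subgroupOf P)
  have hm0 : m ≠ 0 := by
    rintro rfl
    exact hDP.not_ge (relIndex_eq_one.mp (by rwa [pow_zero] at hm))
  calc p ∣ D.relIndex P := by rw [relIndex, hm]; exact dvd_pow_self p hm0
    _ ∣ D.relIndex H := Dvd.intro _ (relIndex_mul_relIndex D P H hDP.le hPH)

theorem IsPGroup.sup_zpowers {G : Type*} [Group G] {p : ℕ} {D : Subgroup G} (hD : IsPGroup p D)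
    {x : G} (hxN : x ∈ normalizer (D : Set G)) {k : ℕ} (hx : orderOf x = p ^ k) :
    IsPGroup p (D ⊔ zpowers x : Subgroup G) :=
  hD.to_sup_of_normal_left' (IsPGroup.of_card (by rw [Nat.card_zpowers, hx]))
    (zpowers_le.mpr hxN)

theorem Subgroup.dvd_relIndex_of_mem_normalizer {G : Type*} [Group G] [Finite G] {p : ℕ}
    [Fact p.Prime] {D H : Subgroup G} (hD : IsPGroup p D) (hDH : D ≤ H) {x : G} (hxH : x ∈ H)
    (hxN : x ∈ normalizer (D : Set G)) (hxD : x ∉ D) (hx : ∃ k, orderOf x = p ^ k) :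
    p ∣ D.relIndex H := by
  refine dvd_relIndex_of_lt (hD.sup_zpowers hxN hx.choose_spec) ?_
    (sup_le hDH (zpowers_le.mpr hxH))
  exact lt_of_le_of_ne le_sup_left fun h => hxD (h ▸ mem_sup_right (mem_zpowers x))

section DiagonalPerm

variable {Ω : Type*} {D : Subgroup (Perm Ω)} {B : Set Ω}
  (hB : Bijective fun q : D × B => (q.1 : Perm Ω) q.2)

noncomputable def diagonalPerm : Perm B →* Perm Ω :=
  (Equiv.ofBijective _ hB).permCongrHom.toMonoidHom.comp
    { toFun σ := Equiv.prodCongrRight fun _ => σ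
      map_one' := rfl
      map_mul' _ _ := rfl }

theorem diagonalPerm_apply (σ : Perm B) (d : D) (y : B) :
    diagonalPerm hB σ ((d : Perm Ω) y) = (d : Perm Ω) (σ y) := by
  change (Equiv.ofBijective _ hB).permCongr _ (Equiv.ofBijective _ hB (d, y)) = _
  rw [Equiv.permCongr_apply, Equiv.symm_apply_apply]
  rfl

theorem eq_one_of_diagonalPerm_mem {σ : Perm B} (hσ : diagonalPerm hB σ ∈ D) : σ = 1 := by
  ext y
  have h := hB.1 (a₁ := (⟨_, hσ⟩, y)) (a₂ := (1, σ y)) <| by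
    simpa using diagonalPerm_apply hB σ 1 y
  exact congrArg Subtype.val (Prod.ext_iff.mp h).2.symm

theorem diagonalPerm_injective : Injective (diagonalPerm hB) :=
  (injective_iff_map_eq_one _).mpr fun _ hσ => eq_one_of_diagonalPerm_mem hB (hσ ▸ D.one_mem)

theorem diagonalPerm_mem_centralizer (σ : Perm B) :
    diagonalPerm hB σ ∈ centralizer (D : Set (Perm Ω)) := mem_centralizer_iff.mpr fun c hc => by
  ext x
  obtain ⟨⟨d, y⟩, rfl⟩ := hB.2 x
  have := diagonalPerm_apply hB σ (⟨c, hc⟩ * d) y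
  simp only [Subgroup.coe_mul, Perm.mul_apply] at this ⊢
  rw [this, diagonalPerm_apply]

theorem sign_diagonalPerm [Fintype Ω] [DecidableEq Ω] [Fintype B] (σ : Perm B) :
    Perm.sign (diagonalPerm hB σ) = Perm.sign σ ^ Nat.card D := by
  classical
  change Perm.sign ((Equiv.ofBijective _ hB).permCongr (Equiv.prodCongrRight fun _ => σ)) = _
  rw [Perm.sign_permCongr, Perm.sign_prodCongrRight, Finset.prod_const, Finset.card_univ,
    Nat.card_eq_fintype_card]

theorem diagonalPerm_commute {g : Perm Ω} (hg : ∀ e : D, ∃ h : D, ∀ y : B,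
    g ((e : Perm Ω) y) = (h : Perm Ω) y) (σ : Perm B) :
    diagonalPerm hB σ * g = g * diagonalPerm hB σ := by
  ext x
  obtain ⟨⟨e, y⟩, rfl⟩ := hB.2 x
  obtain ⟨h, hh⟩ := hg e
  simp only [Perm.mul_apply]
  rw [hh, diagonalPerm_apply, diagonalPerm_apply, hh]

end DiagonalPerm

namespace Setoid

section Stabilizer

variable {Ω : Type*}

def IsInvariant (r : Setoid Ω) (g : Perm Ω) : Prop :=
  ∀ x y, r x y ↔ r (g x) (g y)

theorem isInvariant_of_rel_apply {r : Setoid Ω} {g : Perm Ω} (h : ∀ x, r x (g x)) :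
    r.IsInvariant g := fun x y =>
  ⟨fun hxy => r.trans (r.trans (r.symm (h x)) hxy) (h y),
    fun hg => r.trans (r.trans (h x) hg) (r.symm (h y))⟩

theorem isInvariant_swap [DecidableEq Ω] {r : Setoid Ω} {a b : Ω} (hab : r a b) :
    r.IsInvariant (swap a b) := by
  refine isInvariant_of_rel_apply fun x => ?_
  rcases eq_or_ne x a with rfl | hxa
  · rwa [swap_apply_left]
  rcases eq_or_ne x b with rfl | hxb
  · rw [swap_apply_right]; exact r.symm hab
  · rw [swap_apply_of_ne_of_ne hxa hxb]

theorem IsInvariant.ofSubtype {r : Setoid Ω} {g : Perm Ω} (hg : r.IsInvariant g) {U : Set Ω}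
    [DecidablePred (· ∈ U)] (hU : ∀ x, g x ∈ U ↔ x ∈ U) (hsat : ∀ x y, r x y → (x ∈ U ↔ y ∈ U)) :
    r.IsInvariant (Perm.ofSubtype (g.subtypePerm hU)) := by
  intro x y
  by_cases hx : x ∈ U <;> by_cases hy : y ∈ U
  · rw [Perm.ofSubtype_subtypePerm_of_mem hU hx, Perm.ofSubtype_subtypePerm_of_mem hU hy]
    exact hg x y
  · rw [Perm.ofSubtype_subtypePerm_of_mem hU hx, Perm.ofSubtype_apply_of_not_mem _ hy]
    exact iff_of_false (fun h => hy ((hsat _ _ h).mp hx))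
      (fun h => hy ((hsat _ _ h).mp ((hU x).mpr hx)))
  · rw [Perm.ofSubtype_apply_of_not_mem _ hx, Perm.ofSubtype_subtypePerm_of_mem hU hy]
    exact iff_of_false (fun h => hx ((hsat _ _ h).mpr hy))
      (fun h => hx ((hsat _ _ h).mpr ((hU y).mpr hy)))
  · rw [Perm.ofSubtype_apply_of_not_mem _ hx, Perm.ofSubtype_apply_of_not_mem _ hy]

def stabilizer (F : Set (Setoid Ω)) : Subgroup (Perm Ω) where
  carrier := {g | ∀ r ∈ F, r.IsInvariant g}
  one_mem' _ _ _ _ := Iff.rfl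
  mul_mem' ha hb r hr x y := (hb r hr x y).trans (ha r hr _ _)
  inv_mem' {g} hg r hr x y := by
    simpa only [Perm.coe_inv, apply_symm_apply] using (hg r hr (g⁻¹ x) (g⁻¹ y)).symm

variable {F : Set (Setoid Ω)}

theorem mem_stabilizer {g : Perm Ω} : g ∈ stabilizer F ↔ ∀ r ∈ F, r.IsInvariant g := Iff.rfl

@[simp]
theorem stabilizer_empty : stabilizer (∅ : Set (Setoid Ω)) = ⊤ :=
  Subgroup.eq_top_iff' _ |>.mpr fun _ r hr => (Set.notMem_empty r hr).elim

theorem swap_mem_stabilizer [DecidableEq Ω] {a b : Ω} (h : ∀ r ∈ F, r a b) :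
    swap a b ∈ stabilizer F := fun r hr => isInvariant_swap (h r hr)

theorem subtypePerm_mem_stabilizer_comap {g : Perm Ω} (hg : g ∈ stabilizer F) {U : Set Ω}
    (hU : ∀ x, g x ∈ U ↔ x ∈ U) :
    g.subtypePerm hU ∈ stabilizer (comap (↑) '' F : Set (Setoid U)) := by
  rintro _ ⟨r, hr, rfl⟩ x y
  exact hg r hr x y

theorem IsInvariant.of_mem_insert_bot {r : Setoid Ω} (hr : r ∈ insert ⊥ F) {g : Perm Ω}
    (hg : g ∈ stabilizer F) : r.IsInvariant g := by
  rcases hr with rfl | hr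
  · exact fun x y => g.injective.eq_iff.symm
  · exact hg r hr

theorem IsInvariant.of_mem_insert_top {r : Setoid Ω} (hr : r ∈ insert ⊤ F) {g : Perm Ω}
    (hg : g ∈ stabilizer F) : r.IsInvariant g := by
  rcases hr with rfl | hr
  · exact isInvariant_of_rel_apply fun _ => trivial
  · exact hg r hr

end Stabilizer

section Pretransitive

variable {Ω : Type*}

def IsPretransitive (r : Setoid Ω) (D : Subgroup (Perm Ω)) : Prop :=
  ∀ x y, ∃ d ∈ D, r (d x) y

variable {D : Subgroup (Perm Ω)}

theorem IsPretransitive.mono {r s : Setoid Ω} (hrs : r ≤ s) (hr : r.IsPretransitive D) :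
    s.IsPretransitive D := fun x y =>
  let ⟨d, hd, h⟩ := hr x y
  ⟨d, hd, hrs h⟩

theorem isPretransitive_top : (⊤ : Setoid Ω).IsPretransitive D :=
  fun _ _ => ⟨1, D.one_mem, trivial⟩

theorem isPretransitive_bot_iff :
    (⊥ : Setoid Ω).IsPretransitive D ↔ ∀ x y, ∃ d ∈ D, d x = y := Iff.rfl

theorem exists_cut [Finite Ω] {F : Set (Setoid Ω)} (hF : IsChain (· ≤ ·) F)
    (hD : ¬ (⊥ : Setoid Ω).IsPretransitive D) :
    ∃ R ∈ insert ⊥ F, ∃ S ∈ insert ⊤ F, ¬ R.IsPretransitive D ∧ S.IsPretransitive D ∧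
      ∀ r ∈ F, r ≤ R ∨ S ≤ r := by
  obtain ⟨S, ⟨hSF, hS⟩, hSmin⟩ := (Set.toFinite {s ∈ insert ⊤ F | s.IsPretransitive D})
    |>.exists_minimal ⟨⊤, Set.mem_insert _ _, isPretransitive_top⟩
  obtain ⟨R, ⟨hRF, hR⟩, hRmax⟩ := (Set.toFinite {s ∈ insert ⊥ F | ¬ s.IsPretransitive D})
    |>.exists_maximal ⟨⊥, Set.mem_insert _ _, hD⟩
  refine ⟨R, hRF, S, hSF, hR, hS, fun r hr => ?_⟩
  by_cases hrD : r.IsPretransitive D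
  · refine .inr ((hF.insert fun _ _ _ => .inr le_top).total hSF (Set.mem_insert_of_mem _ hr)
      |>.elim id fun h => hSmin ⟨Set.mem_insert_of_mem _ hr, hrD⟩ h)
  · refine .inl ((hF.insert fun _ _ _ => .inl bot_le).total hRF (Set.mem_insert_of_mem _ hr)
      |>.elim (fun h => hRmax ⟨Set.mem_insert_of_mem _ hr, hrD⟩ h) id)

end Pretransitive

section FixedClass

variable {Ω : Type*} {F : Set (Setoid Ω)} {D : Subgroup (Perm Ω)} {R S : Setoid Ω}

theorem rel_apply_of_rel_apply (hab : ∀ a ∈ D, ∀ b ∈ D, a * b = b * a)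
    (hSD : ∀ d ∈ D, S.IsInvariant d) (hS : S.IsPretransitive D) {d₀ : Perm Ω} (hd₀ : d₀ ∈ D)
    {b : Ω} (hb : S (d₀ b) b) (x : Ω) : S x (d₀ x) := by
  obtain ⟨e, he, hex⟩ := hS b x
  have hcomm : d₀ (e b) = e (d₀ b) := congrArg (· b) (hab d₀ hd₀ e he)
  refine S.symm (S.trans ((hSD d₀ hd₀ _ _).mp (S.symm hex)) ?_)
  rw [hcomm]
  exact S.trans ((hSD e he _ _).mp hb) hex

theorem exists_mem_centralizer_notMem (hD : D ≤ stabilizer F)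
    (hab : ∀ a ∈ D, ∀ b ∈ D, a * b = b * a) (hfree : ∀ d ∈ D, d ≠ 1 → ∀ x, d x ≠ x)
    (hRD : ∀ d ∈ D, R.IsInvariant d) (hR : ¬ R.IsPretransitive D)
    (hSD : ∀ d ∈ D, S.IsInvariant d) (hS : S.IsPretransitive D)
    (hcut : ∀ r ∈ F, r ≤ R ∨ S ≤ r) {d₀ : Perm Ω} (hd₀ : d₀ ∈ D) (hd₀1 : d₀ ≠ 1) {b : Ω}
    (hb : S (d₀ b) b) {n : ℕ} (hn : d₀ ^ n = 1) :
    ∃ f ∈ centralizer (D : Set (Perm Ω)) ⊓ stabilizer F, f ∉ D ∧ f ^ n = 1 := by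
  classical
  obtain ⟨z, a, hza⟩ : ∃ z a, ∀ d ∈ D, ¬ R (d z) a := by
    simpa [IsPretransitive] using hR
  set U : Set Ω := {x | ∃ d ∈ D, R (d x) a}
  have hUD : ∀ c ∈ D, ∀ x, c x ∈ U ↔ x ∈ U := fun c hc x =>
    ⟨fun ⟨d, hd, h⟩ => ⟨d * c, D.mul_mem hd hc, h⟩,
      fun ⟨d, hd, h⟩ => ⟨d * c⁻¹, D.mul_mem hd (D.inv_mem hc), by simpa using h⟩⟩
  have hUR : ∀ x y, R x y → (x ∈ U ↔ y ∈ U) := fun x y hxy =>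
    ⟨fun ⟨d, hd, h⟩ => ⟨d, hd, R.trans (R.symm ((hRD d hd x y).mp hxy)) h⟩,
      fun ⟨d, hd, h⟩ => ⟨d, hd, R.trans ((hRD d hd x y).mp hxy) h⟩⟩
  set f := Perm.ofSubtype (d₀.subtypePerm (hUD d₀ hd₀))
  have hfU : ∀ x ∈ U, f x = d₀ x := fun x hx => Perm.ofSubtype_subtypePerm_of_mem _ hx
  have hfU' : ∀ x ∉ U, f x = x := fun x hx => Perm.ofSubtype_apply_of_not_mem _ hx
  have hfK : f ∈ stabilizer F := fun r hr => (hcut r hr).elim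
    (fun hrR => (hD hd₀ r hr).ofSubtype _ fun x y h => hUR x y (hrR h))
    (fun hSr => isInvariant_of_rel_apply fun x => by
      by_cases hx : x ∈ U
      · rw [hfU x hx]; exact hSr (rel_apply_of_rel_apply hab hSD hS hd₀ hb x)
      · rw [hfU' x hx])
  have hfC : f ∈ centralizer (D : Set (Perm Ω)) := mem_centralizer_iff.mpr fun c hc => by
    ext x
    by_cases hx : x ∈ U
    · simp only [Perm.mul_apply, hfU x hx, hfU (c x) ((hUD c hc x).mpr hx)]
      exact congrArg (· x) (hab c hc d₀ hd₀)
    · simp only [Perm.mul_apply, hfU' x hx, hfU' (c x) (mt (hUD c hc x).mp hx)]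
  refine ⟨f, ⟨hfC, hfK⟩, fun hfD => ?_, ?_⟩
  · have hz : z ∉ U := fun ⟨d, hd, h⟩ => hza d hd h
    have ha : a ∈ U := ⟨1, D.one_mem, R.refl a⟩
    refine hfree f hfD (fun h1 => hfree d₀ hd₀ hd₀1 a ?_) z (hfU' z hz)
    rw [← hfU a ha, h1, Perm.one_apply]
  · rw [← map_pow, Perm.subtypePerm_pow]
    simp only [hn]
    exact (congrArg Perm.ofSubtype (Perm.subtypePerm_one _ _)).trans (map_one _)

end FixedClass

section FundamentalDomain

variable {Ω : Type*} {F : Set (Setoid Ω)} {D : Subgroup (Perm Ω)} {B : Set Ω} {S : Setoid Ω}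
  (hB : Bijective fun q : D × B => (q.1 : Perm Ω) q.2)
  (hSB : ∀ (d d' : D) (y y' : B), S ((d : Perm Ω) y) ((d' : Perm Ω) y') ↔ d = d')
include hB hSB

theorem mem_iff_rel (y₀ : B) {x : Ω} : x ∈ B ↔ S x y₀ := by
  obtain ⟨⟨d, y⟩, rfl⟩ := hB.2 x
  have h := hSB d 1 y y₀
  simp only [OneMemClass.coe_one, Perm.one_apply] at h
  rw [h]
  refine ⟨fun hy => ?_, fun hd => hd ▸ y.2⟩
  have := hB.1 (a₁ := (d, y)) (a₂ := (1, ⟨_, hy⟩)) rfl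
  exact (Prod.ext_iff.mp this).1

theorem exists_ne_rel_of_rel (hD : D ≤ stabilizer F) {a₀ a₁ : Ω}
    (ha : a₀ ≠ a₁) (hrel : ∀ r ∈ F, r a₀ a₁) (hS : S a₀ a₁) :
    ∃ y₀ y₁ : B, y₀ ≠ y₁ ∧ ∀ r ∈ F, r y₀ y₁ := by
  obtain ⟨⟨d, y₀⟩, rfl⟩ := hB.2 a₀
  obtain ⟨⟨d', y₁⟩, rfl⟩ := hB.2 a₁
  obtain rfl := (hSB d d' y₀ y₁).mp hS
  exact ⟨y₀, y₁, fun h => ha (by simp only [h]), fun r hr => (hD d.2 r hr _ _).mpr (hrel r hr)⟩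

theorem diagonalPerm_mem_stabilizer (hD : D ≤ stabilizer F) (hFS : ∀ r ∈ F, r ≤ S ∨ S ≤ r)
    {σ : Perm B} (hσ : σ ∈ stabilizer (comap (↑) '' F)) : diagonalPerm hB σ ∈ stabilizer F := by
  intro r hr
  rcases hFS r hr with hrS | hSr
  · intro x x'
    obtain ⟨⟨d, y⟩, rfl⟩ := hB.2 x
    obtain ⟨⟨d', y'⟩, rfl⟩ := hB.2 x'
    simp only [diagonalPerm_apply]
    by_cases hdd : d = d'
    · subst hdd
      exact (hD d.2 r hr y y').symm.trans ((hσ _ ⟨r, hr, rfl⟩ y y').trans (hD d.2 r hr _ _))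
    · exact iff_of_false (fun h => hdd ((hSB _ _ _ _).mp (hrS h)))
        (fun h => hdd ((hSB _ _ _ _).mp (hrS h)))
  · refine isInvariant_of_rel_apply fun x => ?_
    obtain ⟨⟨d, y⟩, rfl⟩ := hB.2 x
    rw [diagonalPerm_apply]
    exact hSr ((hSB d d y (σ y)).mpr rfl)

theorem eq_one_of_not_dvd_relIndex [Finite Ω] {p : ℕ} [Fact p.Prime] (hDp : IsPGroup p D)
    (hDH : D ≤ centralizer (D : Set (Perm Ω)) ⊓ stabilizer F)
    (hFS : ∀ r ∈ F, r ≤ S ∨ S ≤ r)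
    (hndvd : ¬ p ∣ D.relIndex (centralizer (D : Set (Perm Ω)) ⊓ stabilizer F))
    {σ : Perm B} (hσ : σ ∈ stabilizer (comap (↑) '' F))
    (hσp : ∃ k, orderOf σ = p ^ k) : σ = 1 := by
  by_contra hσ1
  have hC := diagonalPerm_mem_centralizer hB σ
  refine hndvd (dvd_relIndex_of_mem_normalizer hDp hDH
    ⟨hC, diagonalPerm_mem_stabilizer hB hSB (hDH.trans inf_le_right) hFS hσ⟩
    (centralizer_le_normalizer _ hC) (fun h => hσ1 (eq_one_of_diagonalPerm_mem hB h)) ?_)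
  rwa [orderOf_injective _ (diagonalPerm_injective hB)]


theorem exists_apply_eq_of_mem_normalizer {p : ℕ} [Fact p.Prime] (hDp : IsPGroup p D)
    (hD : D ≤ stabilizer F) (hKS : ∀ g ∈ stabilizer F, S.IsInvariant g)
    (h1 : ∀ σ ∈ stabilizer (comap ((↑) : B → Ω) '' F), (∃ k, orderOf σ = p ^ k) → σ = 1)
    {g : Perm Ω} (hgN : g ∈ normalizer (D : Set (Perm Ω))) (hgK : g ∈ stabilizer F)
    (hg : ∃ k, orderOf g = p ^ k) (e : D) :
    ∃ h : D, ∀ y : B, g ((e : Perm Ω) y) = (h : Perm Ω) y := by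
  rcases isEmpty_or_nonempty B with _ | ⟨⟨y₁⟩⟩
  · exact ⟨1, isEmptyElim⟩
  obtain ⟨⟨h, y₀⟩, hh⟩ := hB.2 (g ((e : Perm Ω) y₁))
  set k := (h : Perm Ω)⁻¹ * g * e with hk
  have hkK : k ∈ stabilizer F := mul_mem (mul_mem (inv_mem (hD h.2)) hgK) (hD e.2)
  have hky₁ : k y₁ = y₀ := by simp [k, ← show (h : Perm Ω) y₀ = g ((e : Perm Ω) y₁) from hh]
  have hkB : ∀ x, k x ∈ B ↔ x ∈ B := fun x => by
    rw [mem_iff_rel hB hSB y₀ (x := k x), mem_iff_rel hB hSB y₁ (x := x), ← hky₁]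
    exact (hKS k hkK x y₁).symm
  have hkP : k ∈ D ⊔ zpowers g := mul_mem (mul_mem (mem_sup_left (inv_mem h.2))
    (mem_sup_right (mem_zpowers g))) (mem_sup_left e.2)
  obtain ⟨m, hm⟩ := hDp.sup_zpowers hgN hg.choose_spec ⟨k, hkP⟩
  have hk1 : k.subtypePerm hkB = 1 := by
    refine h1 _ (subtypePerm_mem_stabilizer_comap hkK hkB)
      (exists_orderOf_eq_prime_pow_iff.mpr ⟨m, ?_⟩)
    have hkm : k ^ p ^ m = 1 := by simpa using congrArg Subtype.val hm
    ext y
    simp [Perm.subtypePerm_pow, hkm]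
  refine ⟨h, fun y => ?_⟩
  have := congrArg (fun σ : Perm B => (σ y : Ω)) hk1
  simp only [Perm.subtypePerm_apply, hk, Perm.mul_apply, Perm.one_apply] at this
  exact Perm.inv_eq_iff_eq.mp this

end FundamentalDomain

section Free

variable {Ω : Type*} {F : Set (Setoid Ω)} {D : Subgroup (Perm Ω)} {S : Setoid Ω} {b : Ω}

theorem rel_apply_iff_of_free (hSD : ∀ d ∈ D, S.IsInvariant d)
    (hfree : ∀ d ∈ D, S (d b) b → d = 1) (d d' : D) (y y' : {y | S y b}) :
    S ((d : Perm Ω) y) ((d' : Perm Ω) y') ↔ d = d' := by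
  refine ⟨fun h => ?_, by rintro rfl; exact (hSD d d.2 y y').mp (S.trans y.2 (S.symm y'.2))⟩
  set c := (d' : Perm Ω)⁻¹ * d
  have hc : c ∈ D := mul_mem (inv_mem d'.2) d.2
  have hcy : S (c y) y' := by simpa [c] using (hSD _ (inv_mem d'.2) _ _).mp h
  have hcb : S (c b) b := S.trans ((hSD c hc b y).mp (S.symm y.2)) (S.trans hcy y'.2)
  exact Subtype.ext (inv_mul_eq_one.mp (hfree c hc hcb)).symm

theorem bijective_of_free (hSD : ∀ d ∈ D, S.IsInvariant d) (hS : S.IsPretransitive D)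
    (hfree : ∀ d ∈ D, S (d b) b → d = 1) :
    Bijective fun q : D × {y | S y b} => (q.1 : Perm Ω) q.2 := by
  refine ⟨fun ⟨d, y⟩ ⟨d', y'⟩ h => ?_, fun x => ?_⟩
  · simp only at h
    obtain rfl := (rel_apply_iff_of_free hSD hfree d d' y y').mp (h ▸ S.refl _)
    exact Prod.ext rfl (Subtype.ext (d.1.injective h))
  · obtain ⟨d, hd, h⟩ := hS b x
    refine ⟨(⟨d, hd⟩, ⟨d⁻¹ x, ?_⟩), by simp⟩
    simpa using (hSD _ (inv_mem hd) x (d b)).mp (S.symm h)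

theorem exists_odd_involution_of_free [Fintype Ω] [DecidableEq Ω] {p : ℕ} [hp : Fact p.Prime]
    (hF : IsChain (· ≤ ·) F) {a₀ a₁ : Ω} (ha : a₀ ≠ a₁) (hrel : ∀ r ∈ F, r a₀ a₁)
    (hD : D ≤ stabilizer F) (hDC : D ≤ centralizer (D : Set (Perm Ω))) (hDp : IsPGroup p D)
    (hSF : S ∈ insert ⊤ F) (hS : S.IsPretransitive D) (hfree : ∀ d ∈ D, S (d b) b → d = 1)
    (hndvd : ¬ p ∣ D.relIndex (centralizer (D : Set (Perm Ω)) ⊓ stabilizer F)) :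
    Odd p ∧ ∃ τ ∈ centralizer (D : Set (Perm Ω)) ⊓ stabilizer F,
      τ ≠ 1 ∧ τ ^ 2 = 1 ∧ Perm.sign τ = -1 ∧
      ∀ g ∈ normalizer (D : Set (Perm Ω)) ⊓ stabilizer F, (∃ k, orderOf g = p ^ k) →
        τ * g = g * τ := by
  classical
  have hKS : ∀ g ∈ stabilizer F, S.IsInvariant g := fun g hg => .of_mem_insert_top hSF hg
  have hFS : ∀ r ∈ F, r ≤ S ∨ S ≤ r := fun r hr =>
    (hF.insert fun _ _ _ => .inr le_top).total (Set.mem_insert_of_mem _ hr) hSF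
  have hSa : S a₀ a₁ := by
    rcases hSF with rfl | hSF
    exacts [trivial, hrel S hSF]
  have hB := bijective_of_free (fun d hd => hKS d (hD hd)) hS hfree
  have hSB := rel_apply_iff_of_free (fun d hd => hKS d (hD hd)) hfree
  have h1 : ∀ σ ∈ stabilizer (comap ((↑) : {y | S y b} → Ω) '' F),
      (∃ k, orderOf σ = p ^ k) → σ = 1 := fun σ hσ hσp =>
    eq_one_of_not_dvd_relIndex hB hSB hDp (le_inf hDC hD) hFS hndvd hσ hσp
  obtain ⟨y₀, y₁, hy, hyr⟩ := exists_ne_rel_of_rel hB hSB hD ha hrel hSa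
  have hswap : swap y₀ y₁ ∈ stabilizer (comap ((↑) : {y | S y b} → Ω) '' F) :=
    swap_mem_stabilizer (by rintro _ ⟨r, hr, rfl⟩; exact hyr r hr)
  have hswap1 : swap y₀ y₁ ≠ 1 := mt swap_eq_one_iff.mp hy
  have hp2 : p ≠ 2 := by
    rintro rfl
    exact hswap1 (h1 _ hswap ⟨1, (orderOf_eq_prime (by rw [sq, swap_mul_self]) hswap1).trans
      (pow_one 2).symm⟩)
  obtain ⟨m, hm⟩ := IsPGroup.iff_card.mp hDp
  have hodd : Odd p := hp.out.odd_of_ne_two hp2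
  refine ⟨hodd, diagonalPerm hB (swap y₀ y₁),
    ⟨diagonalPerm_mem_centralizer hB _, diagonalPerm_mem_stabilizer hB hSB hD hFS hswap⟩,
    (map_ne_one_iff _ (diagonalPerm_injective hB)).mpr hswap1, ?_, ?_, ?_⟩
  · rw [← map_pow, sq, swap_mul_self, map_one]
  · rw [sign_diagonalPerm, Perm.sign_swap hy, hm]
    exact (hodd.pow).neg_one_pow
  · rintro g ⟨hgN, hgK⟩ hg
    exact diagonalPerm_commute hB
      (exists_apply_eq_of_mem_normalizer hB hSB hDp hD hKS h1 hgN hgK hg) _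

end Free

section Chain

variable {Ω : Type*} {F : Set (Setoid Ω)}

theorem exists_ne_rel_of_isChain [Finite Ω] [Nontrivial Ω] (hF : IsChain (· ≤ ·) F)
    (hbot : ∀ r ∈ F, ⊥ < r) : ∃ a₀ a₁ : Ω, a₀ ≠ a₁ ∧ ∀ r ∈ F, r a₀ a₁ := by
  rcases F.eq_empty_or_nonempty with rfl | hne
  · obtain ⟨a₀, a₁, h⟩ := exists_pair_ne Ω
    exact ⟨a₀, a₁, h, by simp⟩
  obtain ⟨m, hmF, hmin⟩ := (Set.toFinite F).exists_minimal hne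
  obtain ⟨a₀, a₁, hm, ha⟩ : ∃ a₀ a₁, m a₀ a₁ ∧ a₀ ≠ a₁ := by
    by_contra! h
    exact (hbot m hmF).ne' (le_bot_iff.mp fun {x y} hxy => h x y hxy)
  exact ⟨a₀, a₁, ha, fun r hr => (hF.total hmF hr).elim id (fun h => hmin hr h) hm⟩

theorem dvd_relIndex_or_exists_odd_involution [Fintype Ω] [DecidableEq Ω] {p : ℕ} (hp : p.Prime)
    (hF : IsChain (· ≤ ·) F) (hbot : ∀ r ∈ F, ⊥ < r) {D : Subgroup (Perm Ω)}
    (hD : D ≤ stabilizer F) (hab : ∀ a ∈ D, ∀ b ∈ D, a * b = b * a)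
    (hexp : ∀ d ∈ D, d ^ p = 1) (hfree : ∀ d ∈ D, d ≠ 1 → ∀ x, d x ≠ x)
    (hntrans : ¬ ∀ x y, ∃ d ∈ D, d x = y) :
    p ∣ D.relIndex (centralizer (D : Set (Perm Ω)) ⊓ stabilizer F) ∨
    (Odd p ∧ ∃ τ ∈ centralizer (D : Set (Perm Ω)) ⊓ stabilizer F,
      τ ≠ 1 ∧ τ ^ 2 = 1 ∧ Perm.sign τ = -1 ∧
      ∀ g ∈ normalizer (D : Set (Perm Ω)) ⊓ stabilizer F, (∃ k, orderOf g = p ^ k) →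
        τ * g = g * τ) := by
  have := Fact.mk hp
  have hDC : D ≤ centralizer (D : Set (Perm Ω)) := fun a ha =>
    mem_centralizer_iff.mpr fun b hb => hab b hb a ha
  have hDp : IsPGroup p D := fun d => ⟨1, Subtype.ext (by simpa using hexp d d.2)⟩
  have : Nontrivial Ω := by
    by_contra h
    rw [not_nontrivial_iff_subsingleton] at h
    exact hntrans fun x y => ⟨1, D.one_mem, Subsingleton.elim _ _⟩
  obtain ⟨a₀, a₁, ha, hrel⟩ := exists_ne_rel_of_isChain hF hbot
  obtain ⟨R, hRF, S, hSF, hR, hS, hcut⟩ := exists_cut hF (isPretransitive_bot_iff.not.mpr hntrans)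
  refine or_iff_not_imp_left.mpr fun hndvd => ?_
  by_cases hSfree : ∀ d ∈ D, S (d a₀) a₀ → d = 1
  · exact exists_odd_involution_of_free hF ha hrel hD hDC hDp hSF hS hSfree hndvd
  · push Not at hSfree
    obtain ⟨d₀, hd₀, hb, hd₀1⟩ := hSfree
    obtain ⟨f, hf, hfD, hfp⟩ := exists_mem_centralizer_notMem hD hab hfree
      (fun d hd => .of_mem_insert_bot hRF (hD hd)) hR
      (fun d hd => .of_mem_insert_top hSF (hD hd)) hS hcut hd₀ hd₀1 hb (hexp d₀ hd₀)
    have hford : orderOf f = p ^ 1 :=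
      (orderOf_eq_prime hfp fun h => hfD (h ▸ D.one_mem)).trans (pow_one p).symm
    exact (hndvd (dvd_relIndex_of_mem_normalizer hDp (le_inf hDC hD) hf
      (centralizer_le_normalizer _ hf.1) hfD ⟨1, hford⟩)).elim

end Chain

end Setoid

/-- Let `K ≤ Σ_n` be either `Σ_n` itself or the stabilizer of a
strictly increasing chain of proper nontrivial setoids on `Fin n`, and let `D ≤ K` be
an elementary abelian `p`-subgroup acting freely and not transitively on `Fin n`, with
centralizer `C` and normalizer `N` in `K`.  Then either `p` divides `[C : D]`, or `p`
is odd and there is an odd involution `τ ∈ C` commuting with every element of `N` of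
`p`-power order. -/
theorem stmt14 (p n : ℕ) (hp : p.Prime)
    (K : Subgroup (Equiv.Perm (Fin n)))
    (hK : K = ⊤ ∨ ∃ (j : ℕ) (lam : Fin (j + 1) → Setoid (Fin n)),
      StrictMono lam ∧ (∀ t, ⊥ < lam t ∧ lam t < ⊤) ∧
      ∀ g, g ∈ K ↔ ∀ (t : Fin (j + 1)) (x y : Fin n),
        (lam t).r x y ↔ (lam t).r (g x) (g y))
    (D : Subgroup (Equiv.Perm (Fin n))) (hDK : D ≤ K)
    (hab : ∀ a ∈ D, ∀ b ∈ D, a * b = b * a)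
    (hexp : ∀ d ∈ D, d ^ p = 1)
    (hfree : ∀ d ∈ D, d ≠ 1 → ∀ x : Fin n, d x ≠ x)
    (hntrans : ¬ ∀ x y : Fin n, ∃ d ∈ D, d x = y) :
    p ∣ D.relIndex (Subgroup.centralizer (D : Set (Equiv.Perm (Fin n))) ⊓ K) ∨
    (Odd p ∧ ∃ τ ∈ Subgroup.centralizer (D : Set (Equiv.Perm (Fin n))) ⊓ K,
      τ ≠ 1 ∧ τ ^ 2 = 1 ∧ Equiv.Perm.sign τ = -1 ∧
      ∀ g ∈ Subgroup.normalizer (D : Set (Equiv.Perm (Fin n))) ⊓ K, (∃ k : ℕ, orderOf g = p ^ k) → τ * g = g * τ) := by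
  obtain ⟨F, rfl, hF, hbot⟩ : ∃ F : Set (Setoid (Fin n)),
      K = Setoid.stabilizer F ∧ IsChain (· ≤ ·) F ∧ ∀ r ∈ F, ⊥ < r := by
    rcases hK with rfl | ⟨j, lam, hmono, hproper, hmem⟩
    · exact ⟨∅, Setoid.stabilizer_empty.symm, IsChain.empty, fun r hr => hr.elim⟩
    · refine ⟨Set.range lam, ?_, hmono.monotone.isChain_range,
        Set.forall_mem_range.mpr fun t => (hproper t).1⟩
      ext g
      rw [hmem g, Setoid.mem_stabilizer, Set.forall_mem_range]
      rfl
  exact Setoid.dvd_relIndex_or_exists_odd_involution hp hF hbot hDK hab hexp hfree hntrans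
end

section
/- Let p be a prime and n a natural number. Let D be a nontrivial elementary abelian p-subgroup of Σ_n that acts freely and not transitively on Fin n, and let C be the centralizer of D in Σ_n. Then p divides the index [C : D]. -/
/-!
Pick `d ≠ 1` in `D`, a point `x`, and a point `y` outside the `D`-orbit `O` of `x`. The
permutation `g` that acts as `d` on `O` and fixes every other point commutes with `D`, because
`D` is abelian and preserves `O`, and `g ^ p = 1`. It is not in `D`, since it fixes `y` without
being trivial, and `D` acts freely. As `D` is abelian, it is central, hence normal, in its
centralizer `C`, and `g` has order `p` in `C ⧸ D`, so `p ∣ [C : D]`.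
-/

open Equiv MulAction Subgroup

theorem Subgroup.prime_dvd_relIndex_of_pow_eq_one {G : Type*} [Group G] {p : ℕ} [Fact p.Prime]
    {H K : Subgroup G} [(H.subgroupOf K).Normal] {g : G} (hgK : g ∈ K) (hgH : g ∉ H)
    (hg : g ^ p = 1) : p ∣ H.relIndex K := by
  set x : K ⧸ H.subgroupOf K := ((⟨g, hgK⟩ : K) : K ⧸ H.subgroupOf K)
  have hx : x ^ p = 1 := by
    rw [← QuotientGroup.mk_pow, QuotientGroup.eq_one_iff]
    simp [mem_subgroupOf, hg]
  have hx1 : x ≠ 1 := by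
    rwa [Ne, QuotientGroup.eq_one_iff, mem_subgroupOf]
  rw [← orderOf_eq_prime hx hx1]
  exact _root_.orderOf_dvd_natCard x

theorem Subgroup.normal_subgroupOf_centralizer {G : Type*} [Group G] {H : Subgroup G}
    (hH : H ≤ centralizer H) : (H.subgroupOf (centralizer H)).Normal :=
  (normal_subgroupOf_iff_le_normalizer hH).mpr (centralizer_le_normalizer _)

namespace Equiv.Perm

variable {α : Type*}

theorem apply_mem_orbit_iff {D : Subgroup (Perm α)} {a : Perm α} (ha : a ∈ D) (x z : α) :
    a z ∈ orbit D x ↔ z ∈ orbit D x := by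
  change (⟨a, ha⟩ : D) • z ∈ orbit D x ↔ _
  rw [← orbit_eq_iff, orbit_smul, orbit_eq_iff]

theorem ofSubtype_subtypePerm_mem_centralizer {D : Subgroup (Perm α)} {p : α → Prop}
    [DecidablePred p] (hpD : ∀ a ∈ D, ∀ x, p (a x) ↔ p x) {d : Perm α}
    (hd : d ∈ centralizer D) (hdp : ∀ x, p (d x) ↔ p x) :
    ofSubtype (d.subtypePerm hdp) ∈ centralizer D := by
  intro a ha
  have had : a * d = d * a := hd a ha
  ext z
  by_cases hz : p z
  · simp only [Perm.mul_apply, ofSubtype_subtypePerm_of_mem _ hz,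
      ofSubtype_subtypePerm_of_mem _ ((hpD a ha z).mpr hz)]
    exact congr($had z)
  · simp only [Perm.mul_apply, ofSubtype_subtypePerm_of_not_mem _ hz,
      ofSubtype_subtypePerm_of_not_mem _ (mt (hpD a ha z).mp hz)]

theorem exists_mem_centralizer_notMem_pow_eq_one {D : Subgroup (Perm α)}
    (hDC : D ≤ centralizer D) {p : ℕ} (hexp : ∀ d ∈ D, d ^ p = 1)
    (hfree : ∀ d ∈ D, d ≠ 1 → ∀ x, d x ≠ x) (hD : D ≠ ⊥) {x y : α} (hy : y ∉ orbit D x) :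
    ∃ g ∈ centralizer D, g ∉ D ∧ g ^ p = 1 := by
  classical
  obtain ⟨d, hd, hd1⟩ := D.bot_or_exists_ne_one.resolve_left hD
  have horb : ∀ a ∈ D, ∀ z, a z ∈ orbit D x ↔ z ∈ orbit D x := fun a ha => apply_mem_orbit_iff ha x
  set g := ofSubtype (d.subtypePerm (horb d hd))
  have hgx : g x = d x := ofSubtype_subtypePerm_of_mem _ (mem_orbit_self x)
  have hgy : g y = y := ofSubtype_subtypePerm_of_not_mem _ hy
  have hg1 : g ≠ 1 := fun h => hfree d hd hd1 x (by rw [← hgx, h, one_apply])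
  refine ⟨g, ofSubtype_subtypePerm_mem_centralizer horb (hDC hd) _,
    fun hgD => hfree g hgD hg1 y hgy, ?_⟩
  simp only [g, ← map_pow, subtypePerm_pow, hexp d hd]
  exact map_one ofSubtype

end Equiv.Perm

/-- Let `p` be a prime and `D` a nontrivial elementary abelian
`p`-subgroup of `Σ_n` acting freely and not transitively on `Fin n`, with centralizer
`C` in `Σ_n`.  Then `p` divides the index `[C : D]`. -/
theorem stmt17 (p n : ℕ) (hp : p.Prime)
    (D : Subgroup (Equiv.Perm (Fin n))) (hD : D ≠ ⊥)
    (hab : ∀ a ∈ D, ∀ b ∈ D, a * b = b * a)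
    (hexp : ∀ d ∈ D, d ^ p = 1)
    (hfree : ∀ d ∈ D, d ≠ 1 → ∀ x : Fin n, d x ≠ x)
    (hntrans : ¬ ∀ x y : Fin n, ∃ d ∈ D, d x = y) :
    p ∣ D.relIndex (Subgroup.centralizer (D : Set (Equiv.Perm (Fin n)))) := by
  have : Fact p.Prime := ⟨hp⟩
  have hDC : D ≤ centralizer D := fun a ha b hb => hab b hb a ha
  have := normal_subgroupOf_centralizer hDC
  push Not at hntrans
  obtain ⟨x, y, hxy⟩ := hntrans
  have hy : y ∉ orbit D x := by
    rintro ⟨⟨d, hd⟩, rfl⟩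
    exact hxy d hd rfl
  obtain ⟨g, hgC, hgD, hgp⟩ := Perm.exists_mem_centralizer_notMem_pow_eq_one hDC hexp hfree hD hy
  exact prime_dvd_relIndex_of_pow_eq_one hgC hgD hgp
end
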